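/- arXiv:2402.09912 — 3 statements merged into one kernel-verified Lean document; each statement's English description precedes it below -/
import Mathlib

section
/- Let M = Γ + U V where Γ is an invertible n×n real matrix, U is n×m, V is m×n, and M is invertible. Given d ∈ ℝⁿ, define z₁ as the solution of Γ z₁ = d, z₂ as the solution of (I_m + V Γ⁻¹ U) z₂ = V z₁, and z₃ as the solution of Γ z₃ = U z₂. Then M (z₁ - z₃) = d. -/
open Matrix

theorem semibanded_solver_correct {n m : ℕ}
    (Γ : Matrix (Fin n) (Fin n) ℝ) (U : Matrix (Fin n) (Fin m) ℝ)
    (V : Matrix (Fin m) (Fin n) ℝ)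
    (hΓ : IsUnit Γ.det) (hM : IsUnit (Γ + U * V).det)
    (d z₁ z₃ : Fin n → ℝ) (z₂ : Fin m → ℝ)
    (h₁ : Γ *ᵥ z₁ = d)
    (h₂ : (1 + V * Γ⁻¹ * U) *ᵥ z₂ = V *ᵥ z₁)
    (h₃ : Γ *ᵥ z₃ = U *ᵥ z₂) :
    (Γ + U * V) *ᵥ (z₁ - z₃) = d := by
  have hz₃ : z₃ = Γ⁻¹ *ᵥ (U *ᵥ z₂) := by
    rw [← h₃, mulVec_mulVec, Matrix.nonsing_inv_mul Γ hΓ, one_mulVec]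
  have h₂' : z₂ + V *ᵥ (Γ⁻¹ *ᵥ (U *ᵥ z₂)) = V *ᵥ z₁ := by
    rw [← h₂, add_mulVec, one_mulVec, mulVec_mulVec, mulVec_mulVec, Matrix.mul_assoc]
  have hVz₃ : V *ᵥ z₃ = V *ᵥ z₁ - z₂ := by
    rw [hz₃, ← h₂']; ring_nf
  rw [add_mulVec, Matrix.mulVec_sub, Matrix.mulVec_sub, h₁, h₃, ← mulVec_mulVec,
    ← mulVec_mulVec, hVz₃, Matrix.mulVec_sub]
  abel
end

section
/- Let Γ̂ be an invertible n×n real matrix, Û an n×m matrix, V̂ an m×n matrix such that P = Γ̂ + Û V̂ is invertible, and let G be an l×n matrix. Then G P⁻¹ Gᵀ = Γ̃ + Ũ Ṽ, where Γ̃ = G Γ̂⁻¹ Gᵀ, Ũ = -G Γ̂⁻¹ Û (I_m + V̂ Γ̂⁻¹ Û)⁻¹, and Ṽ = V̂ Γ̂⁻¹ Gᵀ. -/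
open Matrix

theorem schur_semibanded_decomposition {n m l : ℕ}
    (Γ : Matrix (Fin n) (Fin n) ℝ) (U : Matrix (Fin n) (Fin m) ℝ)
    (V : Matrix (Fin m) (Fin n) ℝ) (G : Matrix (Fin l) (Fin n) ℝ)
    (hΓ : IsUnit Γ.det) (hP : IsUnit (Γ + U * V).det) :
    G * (Γ + U * V)⁻¹ * Gᵀ =
      G * Γ⁻¹ * Gᵀ +
        (-(G * Γ⁻¹ * U * (1 + V * Γ⁻¹ * U)⁻¹)) * (V * Γ⁻¹ * Gᵀ) := by
  have hfac : Γ + U * V = Γ * (1 + Γ⁻¹ * (U * V)) := by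
    rw [mul_add, mul_one, ← Matrix.mul_assoc, Matrix.mul_nonsing_inv _ hΓ, Matrix.one_mul]
  have hS : IsUnit (1 + V * Γ⁻¹ * U).det := by
    have : (Γ + U * V).det = Γ.det * (1 + Γ⁻¹ * (U * V)).det := by
      rw [hfac, det_mul]
    rw [this] at hP
    have h2 : (1 + Γ⁻¹ * (U * V)).det = (1 + V * Γ⁻¹ * U).det := by
      rw [add_comm (1 : Matrix (Fin n) (Fin n) ℝ), add_comm (1 : Matrix (Fin m) (Fin m) ℝ),
        ← Matrix.mul_assoc, Matrix.mul_assoc V]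
      exact Matrix.det_mul_add_one_comm _ _
    rw [h2] at hP
    exact (IsUnit.mul_iff.mp hP).2
  have key := Matrix.add_mul_mul_inv_eq_sub Γ U 1 V ((Matrix.isUnit_iff_isUnit_det _).mpr hΓ) isUnit_one
    (by rw [inv_one]; exact (Matrix.isUnit_iff_isUnit_det _).mpr hS)
  rw [Matrix.mul_one] at key
  rw [key]
  simp only [inv_one]
  rw [Matrix.mul_sub, Matrix.sub_mul]
  simp only [Matrix.neg_mul, Matrix.mul_assoc]
  abel
end

section
/- With H as in the MPCT cost Hessian (positive semidefinite, built from positive definite Q, R, T, S and horizon N), H can be decomposed as H = Γ̂₀ + Û V̂ where Γ̂₀ = diag(diag(Q,R),...,diag(Q,R), diag(NQ+T, NR+S)) is block diagonal, Y = -1_Nᵀ ⊗ diag(Q,R), Û = [[Yᵀ, 0],[0, I]], V̂ = [[0, I],[Y, 0]], with the low-rank factors of rank at most 2(nx+nu). -/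
open Matrix

namespace Matrix

variable {α m n : Type*} [Fintype n] [DecidableEq n] [Semiring α]

/- Without the type ascriptions the product elaborates with `CStarMatrix`'s default `HMul`
instance, which `fromBlocks_multiply` does not match. -/
theorem fromBlocks_mul_fromBlocks_eq_antidiagonal (B : Matrix m n α) (C : Matrix n m α) :
    (fromBlocks B 0 0 1 : Matrix (m ⊕ n) (n ⊕ n) α) *
        (fromBlocks 0 1 C 0 : Matrix (n ⊕ n) (m ⊕ n) α) = fromBlocks 0 B C 0 := by
  simp [fromBlocks_multiply]

theorem fromBlocks_eq_blockDiagonal_add_mul (A : Matrix m m α) (B : Matrix m n α)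
    (C : Matrix n m α) (D : Matrix n n α) :
    fromBlocks A B C D = fromBlocks A 0 0 D +
      (fromBlocks B 0 0 1 : Matrix (m ⊕ n) (n ⊕ n) α) *
        (fromBlocks 0 1 C 0 : Matrix (n ⊕ n) (m ⊕ n) α) := by
  rw [fromBlocks_mul_fromBlocks_eq_antidiagonal, fromBlocks_add]
  simp

end Matrix

theorem mpct_hessian_semibanded_decomposition_general {nx nu N : ℕ}
    (D : Matrix (Fin nx ⊕ Fin nu) (Fin nx ⊕ Fin nu) ℝ)
    (Dfin : Matrix (Fin nx ⊕ Fin nu) (Fin nx ⊕ Fin nu) ℝ)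
    (Y : Matrix (Fin nx ⊕ Fin nu) (Fin N × (Fin nx ⊕ Fin nu)) ℝ)
    (H : Matrix ((Fin N × (Fin nx ⊕ Fin nu)) ⊕ (Fin nx ⊕ Fin nu))
                ((Fin N × (Fin nx ⊕ Fin nu)) ⊕ (Fin nx ⊕ Fin nu)) ℝ)
    (hH : H = Matrix.fromBlocks
      (fun p q => if p.1 = q.1 then D p.2 q.2 else 0) Yᵀ Y Dfin)
    (Γ₀ : Matrix ((Fin N × (Fin nx ⊕ Fin nu)) ⊕ (Fin nx ⊕ Fin nu))
                 ((Fin N × (Fin nx ⊕ Fin nu)) ⊕ (Fin nx ⊕ Fin nu)) ℝ)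
    (hΓ₀ : Γ₀ = Matrix.fromBlocks
      (fun p q => if p.1 = q.1 then D p.2 q.2 else 0) 0 0 Dfin)
    (Uhat : Matrix ((Fin N × (Fin nx ⊕ Fin nu)) ⊕ (Fin nx ⊕ Fin nu))
                ((Fin nx ⊕ Fin nu) ⊕ (Fin nx ⊕ Fin nu)) ℝ)
    (hUhat : Uhat = Matrix.fromBlocks Yᵀ 0 0 1)
    (Vhat : Matrix ((Fin nx ⊕ Fin nu) ⊕ (Fin nx ⊕ Fin nu))
                ((Fin N × (Fin nx ⊕ Fin nu)) ⊕ (Fin nx ⊕ Fin nu)) ℝ)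
    (hVhat : Vhat = Matrix.fromBlocks 0 1 Y 0) :
    H = Γ₀ + Uhat * Vhat := by
  subst hH hΓ₀ hUhat hVhat
  exact fromBlocks_eq_blockDiagonal_add_mul _ _ _ _

theorem mpct_hessian_semibanded_decomposition {nx nu N : ℕ} (hN : 1 ≤ N)
    (Q T : Matrix (Fin nx) (Fin nx) ℝ) (R S : Matrix (Fin nu) (Fin nu) ℝ)
    (hQ : Q.PosDef) (hR : R.PosDef) (hT : T.PosDef) (hS : S.PosDef)
    (D : Matrix (Fin nx ⊕ Fin nu) (Fin nx ⊕ Fin nu) ℝ)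
    (hD : D = Matrix.fromBlocks Q 0 0 R)
    (Dfin : Matrix (Fin nx ⊕ Fin nu) (Fin nx ⊕ Fin nu) ℝ)
    (hDfin : Dfin = Matrix.fromBlocks ((N : ℝ) • Q + T) 0 0 ((N : ℝ) • R + S))
    (Y : Matrix (Fin nx ⊕ Fin nu) (Fin N × (Fin nx ⊕ Fin nu)) ℝ)
    (hY : Y = fun a q => -D a q.2)
    (H : Matrix ((Fin N × (Fin nx ⊕ Fin nu)) ⊕ (Fin nx ⊕ Fin nu))
                ((Fin N × (Fin nx ⊕ Fin nu)) ⊕ (Fin nx ⊕ Fin nu)) ℝ)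
    (hH : H = Matrix.fromBlocks
      (fun p q => if p.1 = q.1 then D p.2 q.2 else 0) Yᵀ Y Dfin)
    (Γ₀ : Matrix ((Fin N × (Fin nx ⊕ Fin nu)) ⊕ (Fin nx ⊕ Fin nu))
                 ((Fin N × (Fin nx ⊕ Fin nu)) ⊕ (Fin nx ⊕ Fin nu)) ℝ)
    (hΓ₀ : Γ₀ = Matrix.fromBlocks
      (fun p q => if p.1 = q.1 then D p.2 q.2 else 0) 0 0 Dfin)
    (Uhat : Matrix ((Fin N × (Fin nx ⊕ Fin nu)) ⊕ (Fin nx ⊕ Fin nu))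
                ((Fin nx ⊕ Fin nu) ⊕ (Fin nx ⊕ Fin nu)) ℝ)
    (hUhat : Uhat = Matrix.fromBlocks Yᵀ 0 0 1)
    (Vhat : Matrix ((Fin nx ⊕ Fin nu) ⊕ (Fin nx ⊕ Fin nu))
                ((Fin N × (Fin nx ⊕ Fin nu)) ⊕ (Fin nx ⊕ Fin nu)) ℝ)
    (hVhat : Vhat = Matrix.fromBlocks 0 1 Y 0) :
    H = Γ₀ + Uhat * Vhat :=
  mpct_hessian_semibanded_decomposition_general D Dfin Y H hH Γ₀ hΓ₀ Uhat hUhat Vhat hVhat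
end
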